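/- For every odd integer n ≥ 1 and every integer k ≥ 1, the alternating sum J_{n,k} = (−1)^k · Σ_{j=0}^{k} ((−1)^j/(2j)!) · (nπ/2)^{2j} is strictly positive. -/

import Mathlib

/-!
For odd `n` the point `x = nπ/2` is a zero of `cos`, so `J_{n,k}` is the signed Taylor remainder
`(-1)^k (C_k(x) - cos x)`, where `C_k` is the Taylor polynomial of `cos` of degree `2k`
(and `S_k` that of `sin` of degree `2k - 1`).
The signed remainders `(-1)^k (C_k - cos)` and `(-1)^k (sin - S_k)` of `cos` and `sin` all vanish
at `0`, and each is the derivative of the next one in the chain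
`x - sin x ⟶ -(C_1 - cos) ⟶ sin - S_2 ⟶ C_2 - cos ⟶ ⋯`.
Starting from `sin x < x`, positivity on `(0, ∞)` therefore propagates along the chain.
-/

open Real

/-- `J_{n,k} = (-1)^k Σ_{j=0}^{k} ((-1)^j/(2j)!) (nπ/2)^{2j}`. -/
noncomputable def J (n k : ℕ) : ℝ :=
  (-1 : ℝ) ^ k * ∑ j ∈ Finset.range (k + 1),
    ((-1 : ℝ) ^ j / (Nat.factorial (2 * j) : ℝ)) * ((n : ℝ) * π / 2) ^ (2 * j)

noncomputable def cosTaylor (k : ℕ) (x : ℝ) : ℝ :=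
  ∑ j ∈ Finset.range k, ((-1 : ℝ) ^ j / (Nat.factorial (2 * j) : ℝ)) * x ^ (2 * j)

noncomputable def sinTaylor (k : ℕ) (x : ℝ) : ℝ :=
  ∑ j ∈ Finset.range k, ((-1 : ℝ) ^ j / (Nat.factorial (2 * j + 1) : ℝ)) * x ^ (2 * j + 1)


lemma cosTaylor_succ_zero (k : ℕ) : cosTaylor (k + 1) 0 = 1 := by
  simp [cosTaylor, Finset.sum_range_succ']

lemma sinTaylor_zero_right (k : ℕ) : sinTaylor k 0 = 0 := by
  simp [sinTaylor]

lemma hasDerivAt_sinTaylor (k : ℕ) (x : ℝ) :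
    HasDerivAt (sinTaylor k) (cosTaylor k x) x := by
  induction k with
  | zero =>
    have hzero : sinTaylor 0 = fun _ => 0 := by ext; simp [sinTaylor]
    simpa [hzero, cosTaylor] using hasDerivAt_const x (0 : ℝ)
  | succ k ih =>
    have hsucc : sinTaylor (k + 1) = fun y =>
        sinTaylor k y + (-1 : ℝ) ^ k / (Nat.factorial (2 * k + 1) : ℝ) * y ^ (2 * k + 1) := by
      ext; simp [sinTaylor, Finset.sum_range_succ]
    rw [hsucc]
    refine (ih.add ((hasDerivAt_pow _ x).const_mul _)).congr_deriv ?_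
    rw [cosTaylor, cosTaylor, Finset.sum_range_succ, Nat.factorial_succ]
    push_cast
    field_simp

lemma hasDerivAt_cosTaylor (k : ℕ) (x : ℝ) :
    HasDerivAt (cosTaylor (k + 1)) (-sinTaylor k x) x := by
  induction k with
  | zero =>
    have hone : cosTaylor 1 = fun _ => 1 := by ext; simp [cosTaylor]
    simpa [hone, sinTaylor] using hasDerivAt_const x (1 : ℝ)
  | succ k ih =>
    have hsucc : cosTaylor (k + 2) = fun y =>
        cosTaylor (k + 1) y
          + (-1 : ℝ) ^ (k + 1) / (Nat.factorial (2 * k + 2) : ℝ) * y ^ (2 * k + 2) := by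
      ext; simp [cosTaylor, Finset.sum_range_succ _ (k + 1), mul_add]
    rw [hsucc]
    refine (ih.add ((hasDerivAt_pow _ x).const_mul _)).congr_deriv ?_
    rw [sinTaylor, sinTaylor, Finset.sum_range_succ, Nat.factorial_succ (2 * k + 1)]
    push_cast
    field_simp
    ring

lemma pos_of_hasDerivAt_of_pos {f f' : ℝ → ℝ} (hf : ∀ x, HasDerivAt f (f' x) x) (h0 : f 0 = 0)
    (hpos : ∀ x, 0 < x → 0 < f' x) {x : ℝ} (hx : 0 < x) : 0 < f x := by
  have hmono : StrictMonoOn f (Set.Ici 0) := by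
    refine strictMonoOn_of_deriv_pos (convex_Ici 0)
      (fun y _ => (hf y).continuousAt.continuousWithinAt) fun y hy => ?_
    rw [interior_Ici] at hy
    exact (hf y).deriv ▸ hpos y hy
  simpa [h0] using hmono Set.self_mem_Ici hx.le hx

lemma hasDerivAt_cos_remainder (k : ℕ) (x : ℝ) :
    HasDerivAt (fun y => (-1 : ℝ) ^ k * (cosTaylor (k + 1) y - cos y))
      ((-1 : ℝ) ^ k * (sin x - sinTaylor k x)) x :=
  (((hasDerivAt_cosTaylor k x).sub (hasDerivAt_cos x)).const_mul _).congr_deriv (by ring)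

lemma hasDerivAt_sin_remainder (k : ℕ) (x : ℝ) :
    HasDerivAt (fun y => (-1 : ℝ) ^ (k + 1) * (sin y - sinTaylor (k + 1) y))
      ((-1 : ℝ) ^ k * (cosTaylor (k + 1) x - cos x)) x :=
  (((hasDerivAt_sin x).sub (hasDerivAt_sinTaylor (k + 1) x)).const_mul _).congr_deriv
    (by ring)

lemma cos_remainder_pos {k : ℕ} (hsin : ∀ x, 0 < x → 0 < (-1 : ℝ) ^ k * (sin x - sinTaylor k x))
    {x : ℝ} (hx : 0 < x) : 0 < (-1 : ℝ) ^ k * (cosTaylor (k + 1) x - cos x) :=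
  pos_of_hasDerivAt_of_pos (hasDerivAt_cos_remainder k) (by simp [cosTaylor_succ_zero]) hsin hx

lemma sin_remainder_pos {k : ℕ} (hk : 1 ≤ k) {x : ℝ} (hx : 0 < x) :
    0 < (-1 : ℝ) ^ k * (sin x - sinTaylor k x) := by
  induction k, hk using Nat.le_induction generalizing x with
  | base => simpa [sinTaylor] using sin_lt hx
  | succ k _ ih =>
    exact pos_of_hasDerivAt_of_pos (hasDerivAt_sin_remainder k) (by simp [sinTaylor_zero_right])
      (fun y hy => cos_remainder_pos (fun z hz => ih hz) hy) hx

theorem J_pos_general (n k : ℕ) (hno : Odd n) (hk : 1 ≤ k) :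
    0 < J n k := by
  obtain ⟨m, rfl⟩ := hno
  set x : ℝ := ((2 * m + 1 : ℕ) : ℝ) * π / 2 with hx
  have hxpos : 0 < x := by positivity
  have hcos : cos x = 0 := by
    rw [hx, show ((2 * m + 1 : ℕ) : ℝ) * π / 2 = m * π + π / 2 by push_cast; ring,
      cos_add_pi_div_two, sin_nat_mul_pi, neg_zero]
  have hJ : J (2 * m + 1) k = (-1 : ℝ) ^ k * (cosTaylor (k + 1) x - cos x) := by
    rw [hcos, sub_zero]; rfl
  exact hJ ▸ cos_remainder_pos (fun y hy => sin_remainder_pos hk hy) hxpos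

/-- For every odd `n ≥ 1` and every `k ≥ 1`, `J_{n,k} > 0`. -/
theorem J_pos (n k : ℕ) (hn : 1 ≤ n) (hno : Odd n) (hk : 1 ≤ k) :
    0 < J n k :=
  J_pos_general n k hno hk
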